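/- Let G be a simple graph on a finite nonempty vertex set V, let k : V → ℕ with k(v) ≥ 1 for all v ∈ V, and let k* = max{k(v) : v ∈ V}. Let G' be the simple graph on the vertex set V ⊕ (Σ v : V, Fin (k* − k(v))) in which: inl v and inl w are adjacent iff v and w are adjacent in G; inl v and inr ⟨w, i⟩ are adjacent iff v = w; and no two vertices of the form inr are adjacent (i.e., G' is obtained from G by attaching k* − k(v) pendant vertices to each v ∈ V). Let 𝟙 and 𝟙' denote the constant functions 1 on V and on V(G'), respectively, and let k*𝟙' denote the constant function k* on V(G'). Then L_{k*𝟙', 𝟙'}(G') = L_{k,𝟙}(G) + ∑_{v ∈ V} (k* − k(v)). -/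

import Mathlib

open Classical Finset

/-- The closed neighborhood `N[v]` of `v` in `G`, as a finset. -/
noncomputable def closedNbhd {V : Type*} [Fintype V] (G : SimpleGraph V) (v : V) : Finset V :=
  Finset.univ.filter (fun w => G.Adj v w ∨ w = v)

lemma mem_closedNbhd_self {V : Type*} [Fintype V] (G : SimpleGraph V) (v : V) :
    v ∈ closedNbhd G v := by simp [closedNbhd]

/-- `f` is a `(k,u)`-dominating function of `G`. -/
def IsDomFn {V : Type*} [Fintype V] (G : SimpleGraph V) (k u f : V → ℕ) : Prop :=
  ∀ v, f v ≤ u v ∧ k v ≤ ∑ w ∈ closedNbhd G v, f w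

/-- `f` is a `(k,u)`-packing function of `G`. -/
def IsPackFn {V : Type*} [Fintype V] (G : SimpleGraph V) (k u f : V → ℕ) : Prop :=
  ∀ v, f v ≤ u v ∧ ∑ w ∈ closedNbhd G v, f w ≤ k v

/-- `γ_{k,u}(G)`: minimum weight of a `(k,u)`-dominating function. -/
noncomputable def gammaKU {V : Type*} [Fintype V] (G : SimpleGraph V) (k u : V → ℕ) : ℕ :=
  sInf {s | ∃ f, IsDomFn G k u f ∧ s = ∑ v, f v}

/-- `L_{k,u}(G)`: maximum weight of a `(k,u)`-packing function. -/
noncomputable def LKU {V : Type*} [Fintype V] (G : SimpleGraph V) (k u : V → ℕ) : ℕ :=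
  sSup {s | ∃ f, IsPackFn G k u f ∧ s = ∑ v, f v}

/-- The graph obtained from `G` by attaching, for each `i : I`, a pendant vertex
`Sum.inr i` to the vertex `p i` of `G`. -/
def pendAttach {V : Type*} (G : SimpleGraph V) {I : Type*} (p : I → V) :
    SimpleGraph (V ⊕ I) where
  Adj x y :=
    match x, y with
    | Sum.inl v, Sum.inl w => G.Adj v w
    | Sum.inl v, Sum.inr i => v = p i
    | Sum.inr i, Sum.inl v => v = p i
    | Sum.inr _, Sum.inr _ => False
  symm := by
    refine ⟨?_⟩
    rintro (v | i) (w | j) h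
    · exact G.adj_symm h
    · exact h
    · exact h
    · exact h.elim
  loopless := by
    refine ⟨?_⟩
    rintro (v | i) h
    · exact G.ne_of_adj h rfl
    · exact h

section Aux

lemma aux_zero_mem {V : Type*} [Fintype V] (G : SimpleGraph V) (k u : V → ℕ) :
    (0 : ℕ) ∈ {s | ∃ f, IsPackFn G k u f ∧ s = ∑ v, f v} :=
  ⟨fun _ => 0, fun v => ⟨Nat.zero_le _, by simp⟩, by simp⟩

lemma aux_bdd {V : Type*} [Fintype V] (G : SimpleGraph V) (k : V → ℕ) :
    BddAbove {s | ∃ f, IsPackFn G k (fun _ => 1) f ∧ s = ∑ v, f v} := by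
  refine ⟨Fintype.card V, ?_⟩
  rintro s ⟨f, hf, rfl⟩
  calc ∑ v, f v ≤ ∑ _v : V, 1 := Finset.sum_le_sum fun v _ => (hf v).1
    _ = Fintype.card V := by simp

lemma aux_LKU_mem {V : Type*} [Fintype V] (G : SimpleGraph V) (k : V → ℕ) :
    LKU G k (fun _ => 1) ∈ {s | ∃ f, IsPackFn G k (fun _ => 1) f ∧ s = ∑ v, f v} :=
  Nat.sSup_mem ⟨0, aux_zero_mem G k _⟩ (aux_bdd G k)

lemma aux_le_LKU {V : Type*} [Fintype V] (G : SimpleGraph V) (k : V → ℕ) {s : ℕ}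
    (hs : s ∈ {s | ∃ f, IsPackFn G k (fun _ => 1) f ∧ s = ∑ v, f v}) :
    s ≤ LKU G k (fun _ => 1) := le_csSup (aux_bdd G k) hs

lemma aux_reduce {V : Type*} [Fintype V] (G : SimpleGraph V) (k : V → ℕ) :
    ∀ (n : ℕ) (f : V → ℕ), (∑ v, ((∑ w ∈ closedNbhd G v, f w) - k v)) = n → (∀ v, f v ≤ 1) →
    ∃ g, IsPackFn G k (fun _ => 1) g ∧
      ∑ v, f v ≤ ∑ v, g v + ∑ v, ((∑ w ∈ closedNbhd G v, f w) - k v) := by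
  intro n
  induction n using Nat.strong_induction_on with
  | _ n ih =>
    intro f hEn hf1
    rcases Nat.eq_zero_or_pos n with h0 | hpos
    · refine ⟨f, fun v => ⟨hf1 v, ?_⟩, Nat.le_add_right _ _⟩
      have := Finset.sum_eq_zero_iff.mp (hEn.trans h0) v (Finset.mem_univ v)
      omega
    · have hex : ∃ v, 0 < (∑ w ∈ closedNbhd G v, f w) - k v := by
        by_contra h
        push_neg at h
        have : (∑ v, ((∑ w ∈ closedNbhd G v, f w) - k v)) = 0 :=
          Finset.sum_eq_zero fun v _ => Nat.le_zero.mp (h v)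
        omega
      obtain ⟨v, hv⟩ := hex
      obtain ⟨w, hwmem, hw⟩ := Finset.exists_ne_zero_of_sum_ne_zero (by omega :
        (∑ w ∈ closedNbhd G v, f w) ≠ 0)
      have hw1 : 1 ≤ f w := Nat.one_le_iff_ne_zero.mpr hw
      classical
      set f' : V → ℕ := Function.update f w (f w - 1) with hf'
      have hle : ∀ x, f' x ≤ f x := by
        intro x
        by_cases hx : x = w
        · subst hx; simp [f', Function.update_self]
        · simp [f', Function.update_of_ne hx]
      have hsum_sub : ∀ s : Finset V, w ∈ s → ∑ x ∈ s, f' x = (∑ x ∈ s, f x) - 1 := by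
        intro s hws
        rw [Finset.sum_update_of_mem hws, ← Finset.sum_erase_add s f hws,
          Finset.sdiff_singleton_eq_erase]
        omega
      have hsum_le : ∀ s : Finset V, ∑ x ∈ s, f' x ≤ ∑ x ∈ s, f x :=
        fun s => Finset.sum_le_sum fun x _ => hle x
      have hEdec : (∑ u, ((∑ x ∈ closedNbhd G u, f' x) - k u)) < n := by
        rw [← hEn]
        apply Finset.sum_lt_sum
        · intro u _
          have := hsum_le (closedNbhd G u)
          omega
        · refine ⟨v, Finset.mem_univ v, ?_⟩
          have := hsum_sub (closedNbhd G v) hwmem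
          omega
      obtain ⟨g, hg, hgle⟩ := ih _ hEdec f' rfl (fun x => le_trans (hle x) (hf1 x))
      refine ⟨g, hg, ?_⟩
      have h1 : ∑ x, f' x = (∑ x, f x) - 1 := hsum_sub Finset.univ (Finset.mem_univ w)
      have h2 : 1 ≤ ∑ x, f x :=
        le_trans hw1 (Finset.single_le_sum (fun x _ => Nat.zero_le _) (Finset.mem_univ w))
      have h3 : (∑ u, ((∑ x ∈ closedNbhd G u, f' x) - k u)) + 1 ≤
          ∑ u, ((∑ x ∈ closedNbhd G u, f x) - k u) := by
        rw [hEn]; omega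
      omega

variable {V : Type*} [Fintype V] (G : SimpleGraph V) (m : V → ℕ)

lemma aux_nbhd_inl (h : V ⊕ (Σ v : V, Fin (m v)) → ℕ) (v : V) :
    ∑ x ∈ closedNbhd (pendAttach G (Sigma.fst : (Σ v : V, Fin (m v)) → V)) (Sum.inl v), h x
      = (∑ w ∈ closedNbhd G v, h (Sum.inl w)) + ∑ j : Fin (m v), h (Sum.inr ⟨v, j⟩) := by
  classical
  rw [closedNbhd, Finset.sum_filter, Fintype.sum_sum_type]
  congr 1
  · rw [closedNbhd, Finset.sum_filter]
    apply Finset.sum_congr rfl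
    intro w _
    simp [pendAttach]
  · rw [← Finset.univ_sigma_univ, Finset.sum_sigma]
    simp [pendAttach, Finset.sum_ite_eq]

lemma aux_nbhd_inr (h : V ⊕ (Σ v : V, Fin (m v)) → ℕ) (a : V) (j : Fin (m a)) :
    ∑ x ∈ closedNbhd (pendAttach G (Sigma.fst : (Σ v : V, Fin (m v)) → V)) (Sum.inr ⟨a, j⟩), h x
      = h (Sum.inl a) + h (Sum.inr ⟨a, j⟩) := by
  classical
  rw [closedNbhd, Finset.sum_filter, Fintype.sum_sum_type]
  congr 1
  · simp [pendAttach]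
  · simp [pendAttach, Finset.sum_ite_eq']

lemma aux_total_sum (h : V ⊕ (Σ v : V, Fin (m v)) → ℕ) :
    ∑ x : V ⊕ (Σ v : V, Fin (m v)), h x
      = (∑ v, h (Sum.inl v)) + ∑ v, ∑ j : Fin (m v), h (Sum.inr ⟨v, j⟩) := by
  classical
  rw [Fintype.sum_sum_type, ← Finset.univ_sigma_univ, Finset.sum_sigma]

end Aux

/-- with `k* = max{k(v) : v ∈ V}` and `G'` obtained from `G` by attaching
`k* - k(v)` pendant vertices to each vertex `v`, we have
`L_{k*·𝟙, 𝟙}(G') = L_{k,𝟙}(G) + ∑_{v} (k* - k(v))`. -/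
theorem stmt_11 {V : Type*} [Fintype V] [Nonempty V] (G : SimpleGraph V) (k : V → ℕ)
    (hk : ∀ v, 1 ≤ k v) :
    LKU (pendAttach G (Sigma.fst : (Σ v : V, Fin (Finset.univ.sup k - k v)) → V))
        (fun _ => Finset.univ.sup k) (fun _ => 1)
      = LKU G k (fun _ => 1) + ∑ v, (Finset.univ.sup k - k v) := by
  classical
  set K := Finset.univ.sup k with hK
  have hkK : ∀ v, k v ≤ K := fun v => Finset.le_sup (Finset.mem_univ v)
  set m : V → ℕ := fun v => K - k v with hm
  set G' := pendAttach G (Sigma.fst : (Σ v : V, Fin (m v)) → V) with hG'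
  apply le_antisymm
  · -- ≤ : take an optimal packing of G', reduce to one on G
    obtain ⟨h, hh, hhsum⟩ := aux_LKU_mem G' (fun _ => K)
    set f : V → ℕ := fun v => h (Sum.inl v) with hf
    set P : V → ℕ := fun v => ∑ j : Fin (m v), h (Sum.inr ⟨v, j⟩) with hP
    have hf1 : ∀ v, f v ≤ 1 := fun v => (hh (Sum.inl v)).1
    have hPle : ∀ v, P v ≤ m v := by
      intro v
      calc P v ≤ ∑ _j : Fin (m v), 1 :=
            Finset.sum_le_sum fun j _ => (hh (Sum.inr ⟨v, j⟩)).1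
        _ = m v := by simp
    have hcons : ∀ v, (∑ w ∈ closedNbhd G v, f w) + P v ≤ K := by
      intro v
      have := (hh (Sum.inl v)).2
      rwa [aux_nbhd_inl G m h v] at this
    obtain ⟨g, hg, hgle⟩ := aux_reduce G k (∑ v, ((∑ w ∈ closedNbhd G v, f w) - k v)) f rfl hf1
    have hEbound : (∑ v, ((∑ w ∈ closedNbhd G v, f w) - k v)) ≤ ∑ v, (m v - P v) := by
      apply Finset.sum_le_sum
      intro v _
      have h1 := hcons v
      have h2 := hkK v
      simp only [hm]
      omega
    have htot : LKU G' (fun _ => K) (fun _ => 1) = (∑ v, f v) + ∑ v, P v := by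
      rw [hhsum, aux_total_sum m h]
    have hsplit : (∑ v, (m v - P v)) + ∑ v, P v = ∑ v, m v := by
      rw [← Finset.sum_add_distrib]
      apply Finset.sum_congr rfl
      intro v _
      have := hPle v
      omega
    have hgL : ∑ v, g v ≤ LKU G k (fun _ => 1) := aux_le_LKU G k ⟨g, hg, rfl⟩
    rw [htot]
    calc (∑ v, f v) + ∑ v, P v
        ≤ (∑ v, g v + ∑ v, ((∑ w ∈ closedNbhd G v, f w) - k v)) + ∑ v, P v := by
          omega
      _ ≤ (∑ v, g v + ∑ v, (m v - P v)) + ∑ v, P v := by omega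
      _ = ∑ v, g v + ∑ v, m v := by omega
      _ ≤ LKU G k (fun _ => 1) + ∑ v, m v := by omega
  · -- ≥ : extend an optimal packing of G by 1's on pendants
    obtain ⟨f, hf, hfsum⟩ := aux_LKU_mem G k
    set h : V ⊕ (Σ v : V, Fin (m v)) → ℕ := Sum.elim f (fun _ => 1) with hh
    have hpack : IsPackFn G' (fun _ => K) (fun _ => 1) h := by
      rintro (v | ⟨a, j⟩)
      · refine ⟨(hf v).1, ?_⟩
        rw [aux_nbhd_inl G m h v]
        have h1 := (hf v).2
        have h3 := hkK v
        simp only [hh, Sum.elim_inl, Sum.elim_inr, Finset.sum_const, smul_eq_mul, mul_one,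
          Finset.card_univ, Fintype.card_fin]
        simp only [hm]
        omega
      · refine ⟨le_refl 1, ?_⟩
        rw [aux_nbhd_inr G m h a j]
        have h1 : 1 ≤ m a := by
          have := j.isLt
          omega
        have h2 := hkK a
        have h3 := hk a
        have h4 : f a ≤ 1 := (hf a).1
        simp only [hh, Sum.elim_inl, Sum.elim_inr]
        simp only [hm] at h1
        omega
    have htot : (∑ x : V ⊕ (Σ v : V, Fin (m v)), h x)
        = LKU G k (fun _ => 1) + ∑ v, m v := by
      rw [aux_total_sum m h, hfsum]
      congr 1
      apply Finset.sum_congr rfl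
      intro v _
      simp [hh]
    have hle := aux_le_LKU G' (fun _ => K) ⟨h, hpack, rfl⟩
    rw [htot] at hle
    simpa [hm] using hle
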